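/- Let V = (ℤ/2ℤ)³, an 8-element set, and let AGL(3,2) be the subgroup of the symmetric group on V consisting of all invertible affine transformations v ↦ L(v) + b with L ∈ GL(3, ℤ/2ℤ) and b ∈ V. Then AGL(3,2) has order 1344, every element of AGL(3,2) is an even permutation of V, and AGL(3,2) is a maximal subgroup of the alternating group on V (which has order 20160). -/

import Mathlib

/-- The elementary abelian group `(ℤ/2ℤ)³`, an 8-element set. -/
abbrev V : Type := ZMod 2 × ZMod 2 × ZMod 2

/-- The invertible affine transformations `v ↦ L v + b` of `V`,
as a set of permutations of `V`. -/
def affSet : Set (Equiv.Perm V) :=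
  {f | ∃ (L : V →ₗ[ZMod 2] V) (b : V), Function.Bijective L ∧ ∀ v, f v = L v + b}

/-!
Translations of `V = 𝔽₂³` are products of four disjoint transpositions, and every element of
`GL₃(𝔽₂)` is a product of transvections, each of which fixes a plane pointwise and swaps the other
four vectors in two pairs; hence affine maps are even. Since `|GL₃(𝔽₂)| = 7 · 6 · 4 = 168`, the
affine group has order `1344` and index `15` in `A₈`. A subgroup strictly between them would have
index `3` or `5`, and the action of the simple group `A₈` on its cosets would embed `A₈` into `S₅`.
-/

open Equiv Equiv.Perm Matrix Module

open scoped Nat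

section SimpleGroup

variable {G : Type*} [Group G] [IsSimpleGroup G] [Finite G]

theorem Subgroup.eq_top_of_factorial_index_lt {H : Subgroup G} (h : H.index ! < Nat.card G) :
    H = ⊤ := by
  rcases H.normalCore_normal.eq_bot_or_eq_top with hbot | htop
  · have : H.normalCore.index ∣ H.index ! := by
      rw [normalCore_eq_ker, index_ker, index_eq_card, ← Nat.card_perm]
      exact card_subgroup_dvd_card _
    rw [hbot, index_bot] at this
    exact absurd (Nat.le_of_dvd (Nat.factorial_pos _) this) h.not_ge
  · exact top_le_iff.mp (htop ▸ H.normalCore_le)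

theorem Subgroup.eq_or_eq_top_of_le_of_factorial_lt {A K : Subgroup G} (hAK : A ≤ K)
    (hA : ∀ d ∈ A.index.divisors, d = 1 ∨ d = A.index ∨ d ! < Nat.card G) : K = A ∨ K = ⊤ := by
  have hdvd : K.index ∣ A.index := index_dvd_of_le hAK
  rcases hA K.index (Nat.mem_divisors.mpr ⟨hdvd, A.index_ne_zero_of_finite⟩) with h | h | h
  · exact Or.inr (index_eq_one.mp h)
  · refine Or.inl (eq_of_le_of_card_ge hAK ?_).symm
    have := A.card_mul_index
    rw [← K.card_mul_index, h] at this
    exact (Nat.eq_of_mul_eq_mul_right (Nat.pos_of_ne_zero A.index_ne_zero_of_finite) this).ge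
  · exact Or.inr (eq_top_of_factorial_index_lt h)

end SimpleGroup

section AffineGroup

variable (R M : Type*) [Ring R] [AddCommGroup M] [Module R M]

def affinePerm (p : (M ≃ₗ[R] M) × M) : Perm M :=
  p.1.toEquiv.trans (Equiv.addRight p.2)

variable {R M} in
@[simp]
theorem affinePerm_apply (p : (M ≃ₗ[R] M) × M) (v : M) : affinePerm R M p v = p.1 v + p.2 :=
  rfl

theorem affinePerm_injective : Function.Injective (affinePerm R M) := by
  rintro ⟨L₁, b₁⟩ ⟨L₂, b₂⟩ h
  have hb : b₁ = b₂ := by simpa using DFunLike.congr_fun h 0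
  subst hb
  exact Prod.ext (LinearEquiv.ext fun v => by simpa using DFunLike.congr_fun h v) rfl

def affineGroup : Subgroup (Perm M) where
  carrier := Set.range (affinePerm R M)
  one_mem' := ⟨(LinearEquiv.refl R M, 0), by ext; simp⟩
  mul_mem' := by
    rintro _ _ ⟨⟨L₁, b₁⟩, rfl⟩ ⟨⟨L₂, b₂⟩, rfl⟩
    exact ⟨(L₂.trans L₁, L₁ b₂ + b₁), by ext; simp [add_assoc]⟩
  inv_mem' := by
    rintro _ ⟨⟨L, b⟩, rfl⟩
    refine ⟨(L.symm, -L.symm b), Equiv.ext fun v => ?_⟩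
    rw [eq_comm, Equiv.Perm.inv_eq_iff_eq]
    simp

theorem nat_card_affineGroup :
    Nat.card (affineGroup R M) = Nat.card (M ≃ₗ[R] M) * Nat.card M := by
  rw [← Nat.card_prod, ← Nat.card_range_of_injective (affinePerm_injective R M)]
  rfl

end AffineGroup

theorem coe_affineGroup : (affineGroup (ZMod 2) V : Set (Perm V)) = affSet := by
  ext f
  constructor
  · rintro ⟨⟨L, b⟩, rfl⟩
    exact ⟨L, b, L.bijective, fun v => rfl⟩
  · rintro ⟨L, b, hL, hf⟩
    exact ⟨(LinearEquiv.ofBijective L hL, b), Equiv.ext fun v => (hf v).symm⟩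

theorem nat_card_linearEquiv_of_finrank_eq {K W : Type*} [Field K] [Fintype K] [AddCommGroup W]
    [Module K W] [Module.Finite K W] {n : ℕ} (hW : finrank K W = n) :
    Nat.card (W ≃ₗ[K] W) = ∏ i : Fin n, (Fintype.card K ^ n - Fintype.card K ^ (i : ℕ)) := by
  rw [← card_GL_field]
  exact Nat.card_congr ((GeneralLinearGroup.toLin' (finBasisOfFinrankEq K W hW)).trans
    (LinearMap.GeneralLinearGroup.generalLinearEquiv K W)).toEquiv.symm

theorem finrank_V : finrank (ZMod 2) V = 3 := by simp

theorem nat_card_affineGroup_V : Nat.card (affineGroup (ZMod 2) V) = 1344 := by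
  rw [nat_card_affineGroup, nat_card_linearEquiv_of_finrank_eq finrank_V]
  simp [Fin.prod_univ_three]

def Matrix.TransvectionStruct.toPerm {n R : Type*} [Fintype n] [DecidableEq n] [CommRing R]
    (t : TransvectionStruct n R) : Perm (n → R) where
  toFun v := t.toMatrix *ᵥ v
  invFun v := t.inv.toMatrix *ᵥ v
  left_inv v := by simp [mulVec_mulVec, TransvectionStruct.inv_mul]
  right_inv v := by simp [mulVec_mulVec, TransvectionStruct.mul_inv]

theorem Matrix.TransvectionStruct.sign_toPerm_fin_three
    (t : TransvectionStruct (Fin 3) (ZMod 2)) : sign t.toPerm = 1 := by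
  obtain ⟨i, j, hij, c⟩ := t
  revert i j c
  decide

theorem sign_eq_one_of_apply_eq_mulVec {N : Matrix (Fin 3) (Fin 3) (ZMod 2)} (hN : N.det ≠ 0)
    {σ : Perm (Fin 3 → ZMod 2)} (hσ : ∀ v, σ v = N *ᵥ v) : sign σ = 1 := by
  refine diagonal_transvection_induction_of_det_ne_zero
    (fun N => ∀ σ : Perm (Fin 3 → ZMod 2), (∀ v, σ v = N *ᵥ v) → sign σ = 1) N hN ?_ ?_ ?_ σ hσ
  · intro D hD σ hσ
    have hD1 : diagonal D = 1 := by
      rw [det_diagonal, Finset.prod_ne_zero_iff] at hD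
      have hZMod2 : ∀ x : ZMod 2, x ≠ 0 → x = 1 := by decide
      exact diagonal_eq_one.mpr (funext fun i => hZMod2 _ (hD i (Finset.mem_univ i)))
    rw [show σ = 1 from Equiv.ext fun v => by simp [hσ, hD1], map_one]
  · intro t σ hσ
    rw [show σ = t.toPerm from Equiv.ext hσ]
    exact t.sign_toPerm_fin_three
  · intro A B hA hB hPA hPB σ hσ
    have bij : ∀ {C : Matrix (Fin 3) (Fin 3) (ZMod 2)}, C.det ≠ 0 → Function.Bijective (C *ᵥ ·) :=
      fun hC => Finite.injective_iff_bijective.mp (mulVec_injective_of_det_ne_zero hC)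
    have hσAB : σ = Equiv.ofBijective _ (bij hA) * Equiv.ofBijective _ (bij hB) :=
      Equiv.ext fun v => by simp [hσ, mulVec_mulVec]
    rw [hσAB, map_mul, hPA _ fun _ => rfl, hPB _ fun _ => rfl, mul_one]

theorem sign_linearEquiv_of_finrank_eq_three {W : Type*} [AddCommGroup W] [Module (ZMod 2) W]
    [Fintype W] [DecidableEq W] (hW : finrank (ZMod 2) W = 3) (L : W ≃ₗ[ZMod 2] W) :
    sign L.toEquiv = 1 := by
  let e := (finBasisOfFinrankEq (ZMod 2) W hW).equivFun
  rw [← sign_permCongr e.toEquiv]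
  refine sign_eq_one_of_apply_eq_mulVec
    (N := LinearMap.toMatrix' (e.symm.trans (L.trans e)).toLinearMap) ?_ fun v => ?_
  · rw [LinearMap.det_toMatrix']
    exact (LinearEquiv.isUnit_det' _).ne_zero
  · rw [LinearMap.toMatrix'_mulVec]
    rfl

theorem sign_addRight_V : ∀ b : V, sign (Equiv.addRight b) = 1 := by decide

theorem sign_affinePerm_V (p : (V ≃ₗ[ZMod 2] V) × V) : sign (affinePerm (ZMod 2) V p) = 1 := by
  rw [affinePerm, sign_trans, sign_addRight_V, sign_linearEquiv_of_finrank_eq_three finrank_V,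
    one_mul]

theorem affineGroup_V_le_alternatingGroup : affineGroup (ZMod 2) V ≤ alternatingGroup V := by
  rintro _ ⟨p, rfl⟩
  exact sign_affinePerm_V p

theorem nat_card_alternatingGroup_V : Nat.card (alternatingGroup V) = 20160 := by
  rw [Nat.card_eq_fintype_card, card_alternatingGroup]
  rfl

theorem index_affineGroup_V_subgroupOf :
    ((affineGroup (ZMod 2) V).subgroupOf (alternatingGroup V)).index = 15 := by
  have h := ((affineGroup (ZMod 2) V).subgroupOf (alternatingGroup V)).card_mul_index
  rw [nat_card_alternatingGroup_V, Nat.card_congr (Subgroup.subgroupOfEquivOfLe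
    affineGroup_V_le_alternatingGroup).toEquiv, nat_card_affineGroup_V] at h
  omega

theorem eq_affineGroup_or_eq_alternatingGroup {K : Subgroup (Perm V)}
    (hAK : affineGroup (ZMod 2) V ≤ K) (hK : K ≤ alternatingGroup V) :
    K = affineGroup (ZMod 2) V ∨ K = alternatingGroup V := by
  have : IsSimpleGroup (alternatingGroup V) := alternatingGroup.isSimpleGroup (by simp)
  have hdiv : ∀ d ∈ Nat.divisors 15, d = 1 ∨ d = 15 ∨ d ! < 20160 := by decide
  rcases Subgroup.eq_or_eq_top_of_le_of_factorial_lt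
    (Subgroup.subgroupOf_mono (alternatingGroup V) hAK)
    (by rwa [index_affineGroup_V_subgroupOf, nat_card_alternatingGroup_V]) with h | h
  · rw [Subgroup.subgroupOf_inj, inf_of_le_left hK,
      inf_of_le_left affineGroup_V_le_alternatingGroup] at h
    exact Or.inl h
  · exact Or.inr (le_antisymm hK (Subgroup.subgroupOf_eq_top.mp h))

theorem stmt19 :
    (∃ A : Subgroup (Equiv.Perm V),
      (A : Set (Equiv.Perm V)) = affSet ∧
      Nat.card A = 1344 ∧
      A ≤ alternatingGroup V ∧ A ≠ alternatingGroup V ∧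
      ∀ K : Subgroup (Equiv.Perm V),
        A ≤ K → K ≤ alternatingGroup V → K = A ∨ K = alternatingGroup V) ∧
    (∀ f ∈ affSet, Equiv.Perm.sign f = 1) ∧
    Nat.card (alternatingGroup V) = 20160 := by
  refine ⟨⟨affineGroup (ZMod 2) V, coe_affineGroup, nat_card_affineGroup_V,
    affineGroup_V_le_alternatingGroup, fun h => ?_, fun K => eq_affineGroup_or_eq_alternatingGroup⟩,
    fun f hf => ?_, nat_card_alternatingGroup_V⟩
  · have := nat_card_affineGroup_V
    rw [h, nat_card_alternatingGroup_V] at this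
    omega
  · rw [← coe_affineGroup] at hf
    exact affineGroup_V_le_alternatingGroup hf
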